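/- Let S : ℝ^a × ℝ^b → ℝ be C¹ and fix c ∈ ℝ^b. Let g : ℝ^b → ℝ be the linear function g(y) := ⟨c, y⟩. Then the pair q := c, y := ∇_q S(x, c) solves the pullback system q = ∇g(y), y = ∇_q S(x, q) at every x ∈ ℝ^a, and the corresponding pullback value satisfies Φ*[g](x) = g(y) + S(x, q) − ⟨q, y⟩ = S(x, c). Hence the generating function S of a thick morphism is completely recovered from the pullbacks of linear functions: S(x, c) = Φ*[⟨c, ·⟩](x) for all (x, c). -/
import Mathlib

open scoped RealInnerProductSpace

/-- Partial gradient in the second (target momentum) variable. -/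
noncomputable def gradq {a b : ℕ} (S : EuclideanSpace ℝ (Fin a) × EuclideanSpace ℝ (Fin b) → ℝ)
    (x : EuclideanSpace ℝ (Fin a)) (q : EuclideanSpace ℝ (Fin b)) : EuclideanSpace ℝ (Fin b) :=
  gradient (fun q' => S (x, q')) q

lemma gradient_inner_left {b : ℕ} (c y : EuclideanSpace ℝ (Fin b)) :
    gradient (fun z => ⟪c, z⟫) y = c := by
  have h : HasGradientAt (fun z : EuclideanSpace ℝ (Fin b) => ⟪c, z⟫) c y := by
    rw [hasGradientAt_iff_hasFDerivAt]
    have h2 : (InnerProductSpace.toDual ℝ (EuclideanSpace ℝ (Fin b)) c :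
        EuclideanSpace ℝ (Fin b) →L[ℝ] ℝ) = innerSL ℝ c := by
      ext z; simp [InnerProductSpace.toDual_apply_apply]
    rw [h2]
    exact (innerSL ℝ c).hasFDerivAt
  exact h.gradient

/-- The generating function of a thick morphism is recovered from the pullbacks of linear
functions: for `g(y) = ⟨c, y⟩`, the pair `q = c`, `y = ∇_q S(x,c)` solves the pullback
system and the pullback value is `S(x,c)`. -/
theorem generating_function_from_pullback_of_linear {a b : ℕ}
    (S : EuclideanSpace ℝ (Fin a) × EuclideanSpace ℝ (Fin b) → ℝ) (hS : ContDiff ℝ 1 S)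
    (c : EuclideanSpace ℝ (Fin b))
    (g : EuclideanSpace ℝ (Fin b) → ℝ) (hg : ∀ y, g y = ⟪c, y⟫) :
    ∀ x : EuclideanSpace ℝ (Fin a),
      -- q := c, y := ∇_q S(x, c) solve the pullback system q = ∇g(y), y = ∇_q S(x,q):
      gradient g (gradq S x c) = c ∧
      gradq S x c = gradq S x c ∧
      -- and the pullback value is S(x, c):
      g (gradq S x c) + S (x, c) - ⟪c, gradq S x c⟫ = S (x, c) := by
  intro x
  refine ⟨?_, rfl, ?_⟩
  · have : g = fun z => ⟪c, z⟫ := funext hg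
    rw [this, gradient_inner_left]
  · rw [hg]; ring
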